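/- Let Φ be the MPP instance reduced from a 3SAT instance (X, C) with n variables and m clauses (as described in the context). If (X, C) is satisfiable, then Φ admits a solution in which all n+m robots start moving at time step zero, each follows a shortest path, and each arrives at its goal at time step m+2; in particular Φ admits a solution with total arrival time (n+m)(m+2) and makespan m+2. -/

import Mathlib

/-!
Formalization of multi-robot path planning on graphs (MPP).

An MPP instance consists of a connected simple graph `G` on a vertex type `V`,
a finite set of robots (an index type `R`), and injective start/goal
configurations `xI xG : R → V`.  A scheduled path is a map `ℕ → V`.
-/

namespace MPPFormal

variable {V R : Type}

/-- The arrival time of a path `p` with goal `g`: the smallest time `t`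
with `p t = g`. -/
noncomputable def arrivalTime (g : V) (p : ℕ → V) : ℕ := sInf {t | p t = g}

/-- A feasible scheduled path from `s` to `g` in the graph `G`:
it starts at `s`, reaches `g` at some time, stays at `g` forever after the
first time it reaches `g`, and at every time step it either traverses an
edge of `G` or stays put. -/
def FeasiblePath (G : SimpleGraph V) (s g : V) (p : ℕ → V) : Prop :=
  p 0 = s ∧ (∃ t, p t = g) ∧ (∀ t, arrivalTime g p ≤ t → p t = g) ∧
    ∀ t, G.Adj (p t) (p (t + 1)) ∨ p t = p (t + 1)

/-- Two scheduled paths collide if they meet at the same vertex at the same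
time, or if they swap along an edge head-on. -/
def Collide (p q : ℕ → V) : Prop :=
  (∃ t, p t = q t) ∨ ∃ t, p t = q (t + 1) ∧ p (t + 1) = q t ∧ p t ≠ p (t + 1)

/-- The length of a scheduled path: the number of time steps at which it
actually moves. -/
noncomputable def pathLen (p : ℕ → V) : ℕ := Set.ncard {t | p t ≠ p (t + 1)}

/-- A solution to the MPP instance `(G, R, xI, xG)`: a family of pairwise
non-colliding feasible paths, one per robot. -/
def IsSolution (G : SimpleGraph V) (xI xG : R → V) (p : R → ℕ → V) : Prop :=
  (∀ i, FeasiblePath G (xI i) (xG i) (p i)) ∧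
    Pairwise fun i j => ¬ Collide (p i) (p j)

/-- `(G, xI, xG)` together with the robot index type `R` forms an MPP
instance: the graph is connected and the start and goal configurations are
injective. -/
def IsMPPInstance (G : SimpleGraph V) (xI xG : R → V) : Prop :=
  G.Connected ∧ Function.Injective xI ∧ Function.Injective xG

variable [Fintype R]

/-- Total arrival time of a solution. -/
noncomputable def totalTime (xG : R → V) (p : R → ℕ → V) : ℕ :=
  ∑ i, arrivalTime (xG i) (p i)

/-- Makespan (last arrival time) of a solution. -/
noncomputable def makespan (xG : R → V) (p : R → ℕ → V) : ℕ :=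
  Finset.univ.sup fun i => arrivalTime (xG i) (p i)

/-- Total distance traveled in a solution. -/
noncomputable def totalDist (p : R → ℕ → V) : ℕ := ∑ i, pathLen (p i)

/-- Maximum single-robot distance of a solution. -/
noncomputable def maxDist (p : R → ℕ → V) : ℕ :=
  Finset.univ.sup fun i => pathLen (p i)

/-- Minimum total arrival time over all solutions. -/
noncomputable def minTotalTime (G : SimpleGraph V) (xI xG : R → V) : ℕ :=
  sInf {c | ∃ p, IsSolution G xI xG p ∧ totalTime xG p = c}

/-- Minimum makespan over all solutions. -/
noncomputable def minMakespan (G : SimpleGraph V) (xI xG : R → V) : ℕ :=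
  sInf {c | ∃ p, IsSolution G xI xG p ∧ makespan xG p = c}

/-- Minimum total distance over all solutions. -/
noncomputable def minTotalDist (G : SimpleGraph V) (xI xG : R → V) : ℕ :=
  sInf {c | ∃ p, IsSolution G xI xG p ∧ totalDist p = c}

/-- Minimum maximum distance over all solutions. -/
noncomputable def minMaxDist (G : SimpleGraph V) (xI xG : R → V) : ℕ :=
  sInf {c | ∃ p, IsSolution G xI xG p ∧ maxDist p = c}

end MPPFormal

/-!
The reduction from 3SAT to MPP.

A 3SAT instance over `n` variables with `m` clauses assigns to each clause
`j : Fin m` three literals; a literal is a pair `(i, b) : Fin n × Bool`,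
`b = true` meaning the non-negated variable `x_i` and `b = false` the
negated literal `¬ x_i`.  The three literals of each clause involve three
distinct variables.
-/

namespace MPPFormal

/-- A 3SAT instance with variables `x_1, …, x_n` and clauses `c_1, …, c_m`. -/
structure ThreeSat (n m : ℕ) where
  lit : Fin m → Fin 3 → Fin n × Bool
  distinctVars : ∀ j (k k' : Fin 3), k ≠ k' → (lit j k).1 ≠ (lit j k').1

/-- An assignment `a` satisfies the instance if every clause contains a true
literal. -/
def ThreeSat.SatisfiedBy {n m : ℕ} (sat : ThreeSat n m) (a : Fin n → Bool) : Prop :=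
  ∀ j, ∃ k, a (sat.lit j k).1 = (sat.lit j k).2

/-- Satisfiability of a 3SAT instance. -/
def ThreeSat.Satisfiable {n m : ℕ} (sat : ThreeSat n m) : Prop :=
  ∃ a, sat.SatisfiedBy a

/-- Vertices of the MPP instance `Φ` reduced from a 3SAT instance with `n`
variables and `m` clauses:
* `vx i` is the left endpoint `v_{x_i}` of the `i`-th variable strip (start of
  the variable robot `r_{x_i}`);
* `vxg i` is the right endpoint `v_{x_i}^g` (goal of `r_{x_i}`);
* `mid i side k` is the interior vertex of the `i`-th upper (`side = true`)
  or lower (`side = false`) path lying at distance `k + 1` from `vx i`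
  (each of the two paths has length `m + 2`, hence `m + 1` interior
  vertices, `k : Fin (m+1)`);
* `vc j` is the start vertex `v_{c_j}` of the clause robot `r_{c_j}`;
* `vcg j` is its goal vertex `v_{c_j}^g`. -/
inductive PhiV (n m : ℕ) where
  | vx (i : Fin n)
  | vxg (i : Fin n)
  | mid (i : Fin n) (side : Bool) (k : Fin (m + 1))
  | vc (j : Fin m)
  | vcg (j : Fin m)
deriving DecidableEq

/-- Base relation generating the edges of `Φ`:
the two length-`(m+2)` paths of each variable strip; an edge from `v_{c_j}`
to the vertex at distance `j + 1` (`1`-indexed: distance `j`) from `v_{x_i}`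
on the upper (resp. lower) path of `x_i` for each non-negated (resp. negated)
literal of `c_j`; the path `v_{c_1}^g - ⋯ - v_{c_m}^g`; and edges from
`v_{c_m}^g` to every `v_{x_i}`. -/
def phiRel {n m : ℕ} (sat : ThreeSat n m) : PhiV n m → PhiV n m → Prop
  | PhiV.vx i, PhiV.mid i' _ k => i = i' ∧ (k : ℕ) = 0
  | PhiV.mid i s k, PhiV.mid i' s' k' => i = i' ∧ s = s' ∧ (k' : ℕ) = (k : ℕ) + 1
  | PhiV.mid i _ k, PhiV.vxg i' => i = i' ∧ (k : ℕ) = m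
  | PhiV.vc j, PhiV.mid i s k => (∃ l, sat.lit j l = (i, s)) ∧ (k : ℕ) = (j : ℕ)
  | PhiV.vcg j, PhiV.vcg j' => (j' : ℕ) = (j : ℕ) + 1
  | PhiV.vcg j, PhiV.vx _ => (j : ℕ) + 1 = m
  | _, _ => False

/-- The graph of the reduced MPP instance `Φ`. -/
def phiGraph {n m : ℕ} (sat : ThreeSat n m) : SimpleGraph (PhiV n m) :=
  SimpleGraph.fromRel (phiRel sat)

/-- Start configuration of `Φ`: the variable robot `r_{x_i}` (index
`Sum.inl i`) starts at `v_{x_i}`; the clause robot `r_{c_j}` (index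
`Sum.inr j`) starts at `v_{c_j}`. -/
def phiStart {n m : ℕ} : Fin n ⊕ Fin m → PhiV n m :=
  Sum.elim PhiV.vx PhiV.vc

/-- Goal configuration of `Φ`: `r_{x_i}` must reach `v_{x_i}^g` and `r_{c_j}`
must reach `v_{c_j}^g`. -/
def phiGoal {n m : ℕ} : Fin n ⊕ Fin m → PhiV n m :=
  Sum.elim PhiV.vxg PhiV.vcg

end MPPFormal

/-!
Each variable robot `r_{x_i}` walks along the side of its strip that carries the *false* literal
of `x_i`.  Each clause robot `r_{c_j}` steps onto the side of a *true* literal of `c_j`, at distance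
`j` from `v_{x_i}`, walks back to `v_{x_i}` (reached at time `j + 2`, long after `r_{x_i}` has left
it), and then down the goal path to `v_{c_j}^g`.  Every robot moves at every step and arrives at
time `m + 2`.  Variable robots never meet each other (different strips) and never meet clause
robots (different sides, except at `v_{x_i}`, which the variable robot visits first).  Clause
robots never meet each other since they all move in the same direction along a common "clock",
robot `r_{c_j}` being at clock value `t + (m - j)` at time `t`.
-/

namespace MPPFormal

section Schedules

variable {V : Type}

theorem Collide.symm {p q : ℕ → V} (h : Collide p q) : Collide q p := by
  rcases h with ⟨t, ht⟩ | ⟨t, h1, h2, hmove⟩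
  · exact Or.inl ⟨t, ht.symm⟩
  · exact Or.inr ⟨t, h2.symm, h1.symm, fun hq => hmove (h1.trans (hq.symm.trans h2.symm))⟩

def followUntil (w : ℕ → V) (N : ℕ) : ℕ → V := fun t => w (min t N)

variable {w w' : ℕ → V} {N : ℕ}

theorem followUntil_of_le {t : ℕ} (ht : t ≤ N) : followUntil w N t = w t := by
  simp [followUntil, ht]

theorem followUntil_of_ge {t : ℕ} (ht : N ≤ t) : followUntil w N t = w N := by
  simp [followUntil, ht]

theorem arrivalTime_followUntil (hfirst : ∀ k < N, w k ≠ w N) :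
    arrivalTime (w N) (followUntil w N) = N := by
  refine le_antisymm (Nat.sInf_le (followUntil_of_ge le_rfl))
    (le_csInf ⟨N, followUntil_of_ge le_rfl⟩ ?_)
  intro t (ht : followUntil w N t = w N)
  by_contra! hlt
  exact hfirst t hlt (by rwa [followUntil_of_le hlt.le] at ht)

theorem pathLen_followUntil (hmove : ∀ k < N, w k ≠ w (k + 1)) :
    pathLen (followUntil w N) = N := by
  have hmoves : {t | followUntil w N t ≠ followUntil w N (t + 1)} = Finset.range N := by
    ext t
    simp only [Set.mem_ofPred_eq, Finset.coe_range, Set.mem_Iio]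
    constructor
    · intro ht
      by_contra! hge
      exact ht (by rw [followUntil_of_ge hge, followUntil_of_ge (by omega)])
    · intro ht
      rw [followUntil_of_le ht.le, followUntil_of_le ht]
      exact hmove t ht
  rw [pathLen, hmoves, Set.ncard_coe_finset, Finset.card_range]

theorem feasiblePath_followUntil {G : SimpleGraph V} (hfirst : ∀ k < N, w k ≠ w N)
    (hadj : ∀ k < N, G.Adj (w k) (w (k + 1))) :
    FeasiblePath G (w 0) (w N) (followUntil w N) := by
  refine ⟨followUntil_of_le (Nat.zero_le N), ⟨N, followUntil_of_ge le_rfl⟩, ?_, fun t => ?_⟩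
  · intro t ht
    rw [arrivalTime_followUntil hfirst] at ht
    exact followUntil_of_ge ht
  · rcases lt_or_ge t N with ht | ht
    · left
      rw [followUntil_of_le ht.le, followUntil_of_le ht]
      exact hadj t ht
    · right
      rw [followUntil_of_ge ht, followUntil_of_ge (by omega)]

theorem collide_followUntil (h : Collide (followUntil w N) (followUntil w' N)) :
    (∃ k ≤ N, w k = w' k) ∨ ∃ k < N, w k = w' (k + 1) ∧ w (k + 1) = w' k := by
  rcases h with ⟨t, ht⟩ | ⟨t, h1, h2, hmove⟩
  · exact Or.inl ⟨min t N, min_le_right t N, ht⟩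
  · have ht : t < N := by
      by_contra! hge
      exact hmove (by rw [followUntil_of_ge hge, followUntil_of_ge (by omega)])
    rw [followUntil_of_le ht.le, followUntil_of_le ht] at h1 h2
    exact Or.inr ⟨t, ht, h1, h2⟩

theorem not_collide_followUntil_of_visits_earlier
    (h : ∀ k ≤ N, ∀ k' ≤ N, w k = w' k' → k < k') :
    ¬ Collide (followUntil w N) (followUntil w' N) := fun hc => by
  rcases collide_followUntil hc with ⟨k, hk, hmeet⟩ | ⟨k, hk, -, hswap⟩
  · exact lt_irrefl k (h k hk k hk hmeet)
  · exact absurd (h (k + 1) hk k hk.le hswap) (by omega)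

theorem not_collide_followUntil_of_clock (f : V → ℕ) {c c' : ℕ}
    (hw : ∀ k ≤ N, f (w k) = k + c) (hw' : ∀ k ≤ N, f (w' k) = k + c') (hc : c ≠ c') :
    ¬ Collide (followUntil w N) (followUntil w' N) := by
  have hvisits {u u' : ℕ → V} {d d' : ℕ} (hu : ∀ k ≤ N, f (u k) = k + d)
      (hu' : ∀ k ≤ N, f (u' k) = k + d') (hd : d' < d) :
      ¬ Collide (followUntil u N) (followUntil u' N) :=
    not_collide_followUntil_of_visits_earlier fun k hk k' hk' he => by
      have := hu k hk
      have := hu' k' hk'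
      rw [he] at *
      omega
  rcases lt_or_gt_of_ne hc with hlt | hlt
  · exact fun h => hvisits hw' hw hlt h.symm
  · exact hvisits hw hw' hlt

variable {R : Type} [Fintype R] {xG : R → V} {p : R → ℕ → V}

theorem totalTime_of_arrivalTime_eq (h : ∀ i, arrivalTime (xG i) (p i) = N) :
    totalTime xG p = Fintype.card R * N := by
  simp [totalTime, h]

theorem makespan_of_arrivalTime_eq [Nonempty R] (h : ∀ i, arrivalTime (xG i) (p i) = N) :
    makespan xG p = N := by
  simp [makespan, h, Finset.sup_const Finset.univ_nonempty]

end Schedules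

section Routes

variable {n m : ℕ}

def varRoute (i : Fin n) (o : Bool) : ℕ → PhiV n m
  | 0 => .vx i
  | k + 1 => if h : k ≤ m then .mid i o ⟨k, by omega⟩ else .vxg i

/-- Only the values up to time `m + 2` matter. -/
def clauseRoute (j : Fin m) (i : Fin n) (s : Bool) (k : ℕ) : PhiV n m :=
  if k = 0 then .vc j
  else if h : k ≤ j + 1 then .mid i s ⟨j + 1 - k, by omega⟩
  else if h' : k = j + 2 then .vx i
  else .vcg ⟨m + j + 2 - k, by have := j.isLt; omega⟩

def clauseClock : PhiV n m → ℕ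
  | .vc j => m - j
  | .mid _ _ k => m + 1 - k
  | .vx _ => m + 2
  | .vcg l => 2 * m + 2 - l
  | .vxg _ => 0

theorem clauseClock_clauseRoute (j : Fin m) (i : Fin n) (s : Bool) {k : ℕ} (hk : k ≤ m + 2) :
    clauseClock (clauseRoute j i s k) = k + (m - j) := by
  have := j.isLt
  unfold clauseRoute
  split_ifs <;> simp only [clauseClock] <;> omega

theorem clauseRoute_zero (j : Fin m) (i : Fin n) (s : Bool) : clauseRoute j i s 0 = .vc j :=
  if_pos rfl

theorem varRoute_end (i : Fin n) (o : Bool) : varRoute (m := m) i o (m + 2) = .vxg i := by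
  simp [varRoute]

theorem clauseRoute_end (j : Fin m) (i : Fin n) (s : Bool) :
    clauseRoute j i s (m + 2) = .vcg j := by
  have := j.isLt
  rw [clauseRoute, if_neg (by omega), dif_neg (by omega), dif_neg (by omega)]
  congr
  omega

theorem varRoute_ne_end (i : Fin n) (o : Bool) :
    ∀ k < m + 2, varRoute (m := m) i o k ≠ varRoute i o (m + 2) := by
  rintro (_ | k) hk <;> simp [varRoute]
  omega

theorem clauseRoute_ne_end (j : Fin m) (i : Fin n) (s : Bool) :
    ∀ k < m + 2, clauseRoute j i s k ≠ clauseRoute j i s (m + 2) := fun k hk h => by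
  have := congrArg clauseClock h
  rw [clauseClock_clauseRoute j i s hk.le, clauseClock_clauseRoute j i s le_rfl] at this
  omega

theorem varRoute_adj (sat : ThreeSat n m) (i : Fin n) (o : Bool) {k : ℕ} (hk : k < m + 2) :
    (phiGraph sat).Adj (varRoute i o k) (varRoute i o (k + 1)) := by
  simp only [phiGraph, SimpleGraph.fromRel_adj]
  cases k <;> simp only [varRoute] <;> split_ifs <;> simp_all [phiRel]
  omega

theorem clauseRoute_adj (sat : ThreeSat n m) {j : Fin m} {i : Fin n} {s : Bool}
    (hlit : ∃ l, sat.lit j l = (i, s)) {k : ℕ} (hk : k < m + 2) :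
    (phiGraph sat).Adj (clauseRoute j i s k) (clauseRoute j i s (k + 1)) := by
  have := j.isLt
  simp only [phiGraph, SimpleGraph.fromRel_adj]
  unfold clauseRoute
  split_ifs <;> simp_all [phiRel, Fin.ext_iff] <;> omega

theorem eq_of_varRoute_eq {i i' : Fin n} {o o' : Bool} {k k' : ℕ}
    (h : varRoute (m := m) i o k = varRoute i' o' k') : i = i' := by
  cases k <;> cases k' <;> simp only [varRoute] at h <;> (try split_ifs at h) <;> simp_all

theorem varRoute_eq_clauseRoute_cases {i i' : Fin n} {j : Fin m} {o s : Bool} {k k' : ℕ}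
    (h : varRoute i o k = clauseRoute j i' s k') :
    (i = i' ∧ o = s) ∨ (k = 0 ∧ k' = j + 2) := by
  unfold clauseRoute at h
  cases k <;> simp only [varRoute] at h <;> split_ifs at h <;> simp_all

end Routes

section Solution

variable {n m : ℕ}

def assignmentSchedule (sat : ThreeSat n m) (a : Fin n → Bool) (l : Fin m → Fin 3) :
    Fin n ⊕ Fin m → ℕ → PhiV n m
  | .inl i => followUntil (varRoute i (!a i)) (m + 2)
  | .inr j => followUntil (clauseRoute j (sat.lit j (l j)).1 (sat.lit j (l j)).2) (m + 2)

variable (sat : ThreeSat n m) (a : Fin n → Bool) (l : Fin m → Fin 3)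

theorem arrivalTime_assignmentSchedule (r : Fin n ⊕ Fin m) :
    arrivalTime (phiGoal r) (assignmentSchedule sat a l r) = m + 2 := by
  rcases r with i | j
  · simpa [phiGoal, assignmentSchedule, varRoute_end] using
      arrivalTime_followUntil (varRoute_ne_end i (!a i))
  · simpa [phiGoal, assignmentSchedule, clauseRoute_end] using
      arrivalTime_followUntil (clauseRoute_ne_end j _ _)

theorem pathLen_assignmentSchedule (r : Fin n ⊕ Fin m) :
    pathLen (assignmentSchedule sat a l r) = m + 2 := by
  rcases r with i | j
  · exact pathLen_followUntil fun k hk => (varRoute_adj sat i _ hk).ne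
  · exact pathLen_followUntil fun k hk => (clauseRoute_adj sat ⟨l j, rfl⟩ hk).ne

theorem feasiblePath_assignmentSchedule (r : Fin n ⊕ Fin m) :
    FeasiblePath (phiGraph sat) (phiStart r) (phiGoal r) (assignmentSchedule sat a l r) := by
  rcases r with i | j
  · simpa [phiStart, phiGoal, assignmentSchedule, varRoute_end, varRoute] using
      feasiblePath_followUntil (varRoute_ne_end i (!a i)) fun k hk => varRoute_adj sat i _ hk
  · simpa [phiStart, phiGoal, assignmentSchedule, clauseRoute_end, clauseRoute_zero] using
      feasiblePath_followUntil (clauseRoute_ne_end j _ _) fun k hk =>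
        clauseRoute_adj sat ⟨l j, rfl⟩ hk

theorem not_collide_assignmentSchedule_var_clause
    (hl : ∀ j, a (sat.lit j (l j)).1 = (sat.lit j (l j)).2) (i : Fin n) (j : Fin m) :
    ¬ Collide (assignmentSchedule sat a l (.inl i)) (assignmentSchedule sat a l (.inr j)) := by
  refine not_collide_followUntil_of_visits_earlier fun k _ k' _ he => ?_
  rcases varRoute_eq_clauseRoute_cases he with ⟨rfl, hside⟩ | ⟨rfl, rfl⟩
  · rw [hl j] at hside
    exact absurd hside (Bool.not_ne_self _)
  · omega

theorem isSolution_assignmentSchedule (hl : ∀ j, a (sat.lit j (l j)).1 = (sat.lit j (l j)).2) :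
    IsSolution (phiGraph sat) phiStart phiGoal (assignmentSchedule sat a l) := by
  refine ⟨feasiblePath_assignmentSchedule sat a l, ?_⟩
  rintro (i | j) (i' | j') hne
  · exact not_collide_followUntil_of_visits_earlier fun _ _ _ _ he =>
      absurd (eq_of_varRoute_eq he) fun h => hne (congrArg Sum.inl h)
  · exact not_collide_assignmentSchedule_var_clause sat a l hl i j'
  · exact fun hc => not_collide_assignmentSchedule_var_clause sat a l hl i' j hc.symm
  · refine not_collide_followUntil_of_clock clauseClock
      (fun k hk => clauseClock_clauseRoute j _ _ hk)
      (fun k hk => clauseClock_clauseRoute j' _ _ hk) ?_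
    have := j.isLt
    have := j'.isLt
    have : (j : ℕ) ≠ j' := fun h => hne (congrArg Sum.inr (Fin.ext h))
    omega

end Solution

/-- If the 3SAT instance is satisfiable, then the reduced MPP instance `Φ`
admits a solution in which all `n + m` robots start moving at time step zero,
each follows a shortest path, and each arrives at its goal at time step
`m + 2` (so each robot's arrival time and traveled distance equal `m + 2`);
in particular `Φ` admits a solution of total arrival time `(n + m)(m + 2)`
and makespan `m + 2`. -/
theorem satisfiable_gives_optimal_solution {n m : ℕ} (hm : 0 < m)
    (sat : ThreeSat n m) (hsat : sat.Satisfiable) :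
    ∃ p : Fin n ⊕ Fin m → ℕ → PhiV n m,
      IsSolution (phiGraph sat) phiStart phiGoal p ∧
      (∀ i, arrivalTime (phiGoal i) (p i) = m + 2 ∧ pathLen (p i) = m + 2) ∧
      totalTime phiGoal p = (n + m) * (m + 2) ∧
      makespan phiGoal p = m + 2 := by
  obtain ⟨a, ha⟩ := hsat
  choose l hl using ha
  have harrival := arrivalTime_assignmentSchedule sat a l
  have : Nonempty (Fin n ⊕ Fin m) := ⟨.inr ⟨0, hm⟩⟩
  refine ⟨assignmentSchedule sat a l, isSolution_assignmentSchedule sat a l hl,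
    fun r => ⟨harrival r, pathLen_assignmentSchedule sat a l r⟩, ?_,
    makespan_of_arrivalTime_eq harrival⟩
  simpa using totalTime_of_arrivalTime_eq harrival

end MPPFormal
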